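/- Let m ≥ 1, r ≥ 1, and k : Fin m → ℕ with 2r+1 ≤ k(i) for all i. In the m-dimensional r-nearest neighbor torus (the m-fold box product of the cycles C_{k(i)}^r), the vector v(x) = exp(2πi·x(1)/k(1)) is an eigenvector of the Laplacian matrix with eigenvalue 2r + 1 − sin((2r+1)π/k(1))/sin(π/k(1)); in particular this eigenvalue does not depend on the dimension m. -/

import Mathlib

/-! On a function of the first coordinate alone, the Laplacian of a box product acts as the
Laplacian of the first factor, since a move in any other coordinate does not change the value.
On the cycle `C_n^r` the character `a ↦ exp (2πi a / n)` of `ZMod n` is an eigenvector: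
the neighbours of `a` are `a ± s` for `1 ≤ s ≤ r`, so the eigenvalue is
`∑ (2 - 2 cos (2πs / n))`, and the Dirichlet kernel identity
`sin ((2r+1)θ) = sin θ (1 + ∑ 2 cos (2sθ))` puts it in closed form. -/

open Real Complex SimpleGraph Matrix Finset

/-- The `r`-nearest neighbor cycle `C_n^r` on `ZMod n`: distinct vertices `a, b` are adjacent
iff `a - b ≡ s (mod n)` for some `s ∈ {1,…,r} ∪ {n-r,…,n-1}`, i.e. iff `a - b = s` or
`b - a = s` in `ZMod n` for some `1 ≤ s ≤ r`. -/
def nnCycle (n r : ℕ) : SimpleGraph (ZMod n) where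
  Adj a b := a ≠ b ∧ ∃ s ∈ Finset.Icc 1 r, a - b = (s : ZMod n) ∨ b - a = (s : ZMod n)
  symm := by
    constructor
    rintro a b ⟨hne, s, hs, h⟩
    exact ⟨hne.symm, s, hs, h.symm⟩
  loopless := by constructor; rintro a ⟨h, -⟩; exact h rfl

instance nnCycle.adjDecidable (n r : ℕ) : DecidableRel (nnCycle n r).Adj := fun a b =>
  inferInstanceAs (Decidable (a ≠ b ∧ ∃ s ∈ Finset.Icc 1 r,
    a - b = (s : ZMod n) ∨ b - a = (s : ZMod n)))

/-- The `m`-dimensional `r`-nearest neighbor torus: the `m`-fold Cartesian (box) product of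
the cycles `C_{k i}^r`. Two tuples are adjacent iff they agree in all but one coordinate and
differ in that coordinate by an edge of the corresponding cycle. -/
def nnTorus (m r : ℕ) (k : Fin m → ℕ) : SimpleGraph ((i : Fin m) → ZMod (k i)) where
  Adj x y := ∃ i, (∀ l, l ≠ i → x l = y l) ∧ (nnCycle (k i) r).Adj (x i) (y i)
  symm := by
    constructor
    rintro x y ⟨i, h1, h2⟩
    exact ⟨i, fun l hl => (h1 l hl).symm, h2.symm⟩
  loopless := by
    constructor
    rintro x ⟨i, -, h2⟩
    exact h2.ne rfl

instance nnTorus.adjDecidable (m r : ℕ) (k : Fin m → ℕ) :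
    DecidableRel (nnTorus m r k).Adj := fun x y =>
  inferInstanceAs (Decidable (∃ i, (∀ l, l ≠ i → x l = y l) ∧
    (nnCycle (k i) r).Adj (x i) (y i)))

open Function

theorem SimpleGraph.lapMatrix_mulVec_apply_eq_sum_sub {V R : Type*} [Fintype V] [DecidableEq V]
    (G : SimpleGraph V) [DecidableRel G.Adj] [NonAssocRing R] (v : V) (f : V → R) :
    (G.lapMatrix R *ᵥ f) v = ∑ u ∈ G.neighborFinset v, (f v - f u) := by
  rw [lapMatrix_mulVec_apply, Finset.sum_sub_distrib, Finset.sum_const,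
    card_neighborFinset_eq_degree, nsmul_eq_mul]

theorem ZMod.natCast_injOn_Icc_one {n r : ℕ} (h : r < n) :
    Set.InjOn (fun s : ℕ => (s : ZMod n)) (Icc 1 r) :=
  (CharP.natCast_injOn_Iio (ZMod n) n).mono fun s hs => by
    simp only [coe_Icc, Set.mem_Icc, Set.mem_Iio] at hs ⊢; omega

theorem ZMod.disjoint_image_add_image_sub {n r : ℕ} (h : 2 * r + 1 ≤ n) (a : ZMod n) :
    Disjoint ((Icc 1 r).image fun s : ℕ => a + s) ((Icc 1 r).image fun s : ℕ => a - s) := by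
  simp only [Finset.disjoint_left, mem_image, not_exists, not_and]
  rintro _ ⟨s, hs, rfl⟩ t ht hst
  rw [mem_Icc] at hs ht
  have hdvd : n ∣ s + t := by
    rw [← ZMod.natCast_eq_zero_iff]; push_cast; linear_combination -hst
  exact absurd (Nat.le_of_dvd (by omega) hdvd) (by omega)

theorem ZMod.stdAddChar_natCast_add_stdAddChar_neg {N : ℕ} [NeZero N] (s : ℕ) :
    stdAddChar (s : ZMod N) + stdAddChar (-(s : ZMod N)) = 2 * Complex.cos (2 * π * s / N) := by
  rw [← Int.cast_natCast, ← Int.cast_neg, stdAddChar_coe, stdAddChar_coe, Complex.two_cos]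
  push_cast
  ring_nf

theorem Real.sin_mul_one_add_sum_two_cos (θ : ℝ) (r : ℕ) :
    Real.sin θ * (1 + ∑ s ∈ Icc 1 r, 2 * Real.cos (2 * s * θ)) =
      Real.sin ((2 * r + 1) * θ) := by
  induction r with
  | zero => simp
  | succ r ih =>
    have htelescope : Real.sin θ * (2 * Real.cos (2 * (r + 1 : ℕ) * θ)) =
        Real.sin ((2 * (r + 1 : ℕ) + 1) * θ) - Real.sin ((2 * r + 1) * θ) := by
      rw [Real.sin_sub_sin]
      push_cast
      ring_nf
    rw [sum_Icc_succ_top (by omega), ← add_assoc, mul_add, ih, htelescope]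
    ring

theorem Real.sum_two_sub_two_cos_two_pi_div {n : ℕ} (hn : 1 < n) (r : ℕ) :
    ∑ s ∈ Icc 1 r, (2 - 2 * Real.cos (2 * π * s / n)) =
      2 * r + 1 - Real.sin ((2 * r + 1) * π / n) / Real.sin (π / n) := by
  have hsin : Real.sin (π / n) ≠ 0 := by
    have hn' : (1 : ℝ) < n := by exact_mod_cast hn
    exact (Real.sin_pos_of_pos_of_lt_pi (by positivity) (div_lt_self pi_pos hn')).ne'
  have harg : ∀ s : ℕ, 2 * π * s / n = 2 * s * (π / n) := fun s => by ring
  simp only [harg, mul_div_assoc, ← Real.sin_mul_one_add_sum_two_cos,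
    mul_div_cancel_left₀ _ hsin, sum_sub_distrib, sum_const, Nat.card_Icc, Nat.add_sub_cancel,
    nsmul_eq_mul]
  ring

section nnCycle

variable {n r : ℕ} [NeZero n]

theorem nnCycle_neighborFinset (h : 2 * r + 1 ≤ n) (a : ZMod n) :
    (nnCycle n r).neighborFinset a =
      (Icc 1 r).image (fun s : ℕ => a + s) ∪ (Icc 1 r).image (fun s : ℕ => a - s) := by
  have hs_ne_zero : ∀ s ∈ Icc 1 r, (s : ZMod n) ≠ 0 := fun s hs h0 => by
    rw [mem_Icc] at hs
    rw [ZMod.natCast_eq_zero_iff] at h0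
    exact absurd (Nat.le_of_dvd (by omega) h0) (by omega)
  ext b
  simp only [mem_neighborFinset, mem_union, mem_image]
  constructor
  · rintro ⟨-, s, hs, hab | hba⟩
    · exact Or.inr ⟨s, hs, by rw [← hab]; ring⟩
    · exact Or.inl ⟨s, hs, by rw [← hba]; ring⟩
  · rintro (⟨s, hs, rfl⟩ | ⟨s, hs, rfl⟩)
    · exact ⟨fun hab => hs_ne_zero s hs (by linear_combination -hab), s, hs, Or.inr (by ring)⟩
    · exact ⟨fun hab => hs_ne_zero s hs (by linear_combination hab), s, hs, Or.inl (by ring)⟩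

theorem sum_neighborFinset_nnCycle {M : Type*} [AddCommMonoid M] (h : 2 * r + 1 ≤ n)
    (a : ZMod n) (f : ZMod n → M) :
    ∑ b ∈ (nnCycle n r).neighborFinset a, f b = ∑ s ∈ Icc 1 r, (f (a + s) + f (a - s)) := by
  have hinj := ZMod.natCast_injOn_Icc_one (n := n) (r := r) (by omega)
  have hadd : Set.InjOn (fun s : ℕ => a + s) (Icc 1 r) := (add_right_injective a).comp_injOn hinj
  have hsub : Set.InjOn (fun s : ℕ => a - s) (Icc 1 r) := (sub_right_injective).comp_injOn hinj
  rw [nnCycle_neighborFinset h, sum_union (ZMod.disjoint_image_add_image_sub h a), sum_image hadd,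
    sum_image hsub, sum_add_distrib]

theorem nnCycle_lapMatrix_mulVec_stdAddChar (hn : 1 < n) (h : 2 * r + 1 ≤ n) :
    (nnCycle n r).lapMatrix ℂ *ᵥ ⇑(ZMod.stdAddChar (N := n)) =
      ((2 * r + 1 - Real.sin ((2 * r + 1) * π / n) / Real.sin (π / n) : ℝ) : ℂ) •
        ⇑(ZMod.stdAddChar (N := n)) := by
  funext a
  rw [← Real.sum_two_sub_two_cos_two_pi_div hn, lapMatrix_mulVec_apply_eq_sum_sub,
    sum_neighborFinset_nnCycle h, Pi.smul_apply, smul_eq_mul, Complex.ofReal_sum, sum_mul]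
  refine sum_congr rfl fun s _ => ?_
  rw [sub_eq_add_neg a, AddChar.map_add_eq_mul, AddChar.map_add_eq_mul]
  push_cast
  rw [← ZMod.stdAddChar_natCast_add_stdAddChar_neg]
  ring

end nnCycle

section nnTorus

variable {m r : ℕ} {k : Fin m → ℕ} [∀ i, NeZero (k i)]

theorem nnTorus_neighborFinset (x : (i : Fin m) → ZMod (k i)) :
    (nnTorus m r k).neighborFinset x =
      univ.biUnion fun i => ((nnCycle (k i) r).neighborFinset (x i)).image (update x i) := by
  ext y
  simp only [mem_neighborFinset, mem_biUnion, mem_univ, true_and, mem_image]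
  constructor
  · rintro ⟨i, hy, hadj⟩
    refine ⟨i, y i, hadj, funext fun l => ?_⟩
    rcases eq_or_ne l i with rfl | hl
    · exact update_self ..
    · rw [update_of_ne hl, hy l hl]
  · rintro ⟨i, c, hc, rfl⟩
    exact ⟨i, fun l hl => (update_of_ne hl c x).symm, by rwa [update_self]⟩

theorem pairwiseDisjoint_image_update_nnCycle (x : (i : Fin m) → ZMod (k i)) :
    Set.PairwiseDisjoint ↑(univ : Finset (Fin m))
      fun i => ((nnCycle (k i) r).neighborFinset (x i)).image (update x i) := by
  intro i _ j _ hij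
  simp only [onFun, Finset.disjoint_left, mem_image, not_exists, not_and]
  rintro _ ⟨c, hc, rfl⟩ c' - hupd
  have hxi := congrFun hupd i
  rw [update_of_ne hij, update_self] at hxi
  exact (mem_neighborFinset _ _ _).1 hc |>.ne hxi

theorem sum_neighborFinset_nnTorus {M : Type*} [AddCommMonoid M] (x : (i : Fin m) → ZMod (k i))
    (f : ((i : Fin m) → ZMod (k i)) → M) :
    ∑ y ∈ (nnTorus m r k).neighborFinset x, f y =
      ∑ i, ∑ c ∈ (nnCycle (k i) r).neighborFinset (x i), f (update x i c) := by
  rw [nnTorus_neighborFinset, sum_biUnion (pairwiseDisjoint_image_update_nnCycle x)]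
  exact sum_congr rfl fun i _ => sum_image (update_injective x i).injOn

theorem nnTorus_lapMatrix_mulVec_comp_eval {R : Type*} [NonAssocRing R] (i₀ : Fin m)
    (g : ZMod (k i₀) → R) :
    (nnTorus m r k).lapMatrix R *ᵥ (fun x => g (x i₀)) =
      fun x => ((nnCycle (k i₀) r).lapMatrix R *ᵥ g) (x i₀) := by
  funext x
  rw [lapMatrix_mulVec_apply_eq_sum_sub, lapMatrix_mulVec_apply_eq_sum_sub,
    sum_neighborFinset_nnTorus, sum_eq_single i₀]
  · simp only [update_self]
  · intro i _ hi
    simp only [update_of_ne (Ne.symm hi), sub_self, sum_const_zero]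
  · simp

end nnTorus

/-- For `m, r ≥ 1` and `k : Fin m → ℕ` with `2r+1 ≤ k i`: in the `m`-dimensional `r`-nearest
neighbor torus, the vector `v(x) = exp(2πix₁/k₁)` is an eigenvector of the Laplacian with
eigenvalue `2r + 1 - sin((2r+1)π/k₁)/sin(π/k₁)`; in particular this eigenvalue does not
depend on the dimension `m`. -/
theorem multitorus_algebraic_connectivity_eigenvector (m r : ℕ) (hm : 1 ≤ m) (hr : 1 ≤ r)
    (k : Fin m → ℕ) (hk : ∀ i, 2 * r + 1 ≤ k i) :
    haveI : ∀ i, NeZero (k i) := fun i => ⟨by have := hk i; omega⟩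
    (nnTorus m r k).lapMatrix ℂ *ᵥ
        (fun x => Complex.exp (2 * Real.pi * Complex.I * (x ⟨0, hm⟩).val / k ⟨0, hm⟩)) =
      ((2 * r + 1 - Real.sin ((2 * r + 1) * Real.pi / k ⟨0, hm⟩) /
          Real.sin (Real.pi / k ⟨0, hm⟩) : ℝ) : ℂ) •
        (fun x => Complex.exp (2 * Real.pi * Complex.I * (x ⟨0, hm⟩).val / k ⟨0, hm⟩)) := by
  have : ∀ i, NeZero (k i) := fun i => ⟨by have := hk i; omega⟩
  have hk₀ : 1 < k ⟨0, hm⟩ := by have := hk ⟨0, hm⟩; omega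
  simp only [← ZMod.toCircle_apply, ← ZMod.stdAddChar_apply]
  rw [nnTorus_lapMatrix_mulVec_comp_eval, nnCycle_lapMatrix_mulVec_stdAddChar hk₀ (hk _)]
  rfl
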